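/- Let A and B be N×N Hermitian matrices. If there exist r orthonormal vectors that are simultaneously eigenvectors of both A and B, then r ≤ N − (‖[A,B]‖_HS / ‖[A,B]‖₂)², provided [A,B] ≠ 0. -/

import Mathlib

/-!
A common eigenvector of `A` and `B` is annihilated by `C = AB - BA`, so `C` vanishes on `r`
orthonormal vectors. The squared Frobenius norm of `C` is `∑ ‖C bₖ‖²` for any orthonormal basis
`(bₖ)` (the sum equals `∑ ‖C* cⱼ‖²` for every other orthonormal basis `(cⱼ)`), so computing it in
a basis extending the `r` vectors, only `N - r` terms survive, each at most `‖C‖₂²`.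
-/

open scoped Matrix ComplexOrder

noncomputable def frobNorm {n : ℕ} (X : Matrix (Fin n) (Fin n) ℂ) : ℝ :=
  Real.sqrt (∑ i, ∑ j, ‖X i j‖ ^ 2)

noncomputable def specNorm {n : ℕ} (X : Matrix (Fin n) (Fin n) ℂ) : ℝ :=
  ‖LinearMap.toContinuousLinearMap (Matrix.toEuclideanLin X)‖

open Finset Module

namespace OrthonormalBasis

variable {𝕜 E F ι κ : Type*} [RCLike 𝕜] [NormedAddCommGroup E] [InnerProductSpace 𝕜 E]
  [NormedAddCommGroup F] [InnerProductSpace 𝕜 F] [Fintype ι] [Fintype κ]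

theorem sum_sq_norm_apply_eq_sum_sq_norm_adjoint_apply [FiniteDimensional 𝕜 E]
    [FiniteDimensional 𝕜 F] (b : OrthonormalBasis ι 𝕜 E) (c : OrthonormalBasis κ 𝕜 F)
    (T : E →ₗ[𝕜] F) :
    ∑ i, ‖T (b i)‖ ^ 2 = ∑ j, ‖T.adjoint (c j)‖ ^ 2 := by
  calc ∑ i, ‖T (b i)‖ ^ 2
      = ∑ i, ∑ j, ‖inner 𝕜 (c j) (T (b i))‖ ^ 2 := by simp_rw [c.sum_sq_norm_inner_right]
    _ = ∑ j, ∑ i, ‖inner 𝕜 (T.adjoint (c j)) (b i)‖ ^ 2 := by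
        rw [sum_comm]; simp_rw [LinearMap.adjoint_inner_left]
    _ = ∑ j, ‖T.adjoint (c j)‖ ^ 2 := by simp_rw [b.sum_sq_norm_inner_left]

theorem sum_sq_norm_apply_eq [FiniteDimensional 𝕜 E] [FiniteDimensional 𝕜 F]
    (b : OrthonormalBasis ι 𝕜 E) (b' : OrthonormalBasis κ 𝕜 E) (T : E →ₗ[𝕜] F) :
    ∑ i, ‖T (b i)‖ ^ 2 = ∑ i, ‖T (b' i)‖ ^ 2 := by
  obtain ⟨_, c, -⟩ := exists_orthonormalBasis 𝕜 F
  rw [b.sum_sq_norm_apply_eq_sum_sq_norm_adjoint_apply c,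
    b'.sum_sq_norm_apply_eq_sum_sq_norm_adjoint_apply c]

theorem sum_sq_norm_apply_le_of_orthonormal_of_apply_eq_zero [FiniteDimensional 𝕜 E]
    [FiniteDimensional 𝕜 F] (b : OrthonormalBasis κ 𝕜 E) (T : E →L[𝕜] F) {v : ι → E}
    (hv : Orthonormal 𝕜 v) (hTv : ∀ i, T (v i) = 0) :
    ∑ k, ‖T (b k)‖ ^ 2 ≤ (finrank 𝕜 E - Fintype.card ι : ℝ) * ‖T‖ ^ 2 := by
  have hcard : Fintype.card ι ≤ finrank 𝕜 E := hv.linearIndependent.fintype_card_le_finrank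
  have hv' : Orthonormal 𝕜 ((Set.range Sum.inl).domRestrict
      (Sum.elim v (0 : Fin (finrank 𝕜 E - Fintype.card ι) → E))) := by
    classical
    rw [orthonormal_iff_ite]
    rintro ⟨_, i, rfl⟩ ⟨_, j, rfl⟩
    rw [Set.domRestrict_apply, Set.domRestrict_apply, Sum.elim_inl, Sum.elim_inl,
      orthonormal_iff_ite.mp hv i j]
    exact if_congr (Subtype.ext_iff.trans Sum.inl_injective.eq_iff).symm rfl rfl
  obtain ⟨c, hc⟩ := hv'.exists_orthonormalBasis_extension_of_card_eq
    (by rw [Fintype.card_sum, Fintype.card_fin]; omega)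
  calc ∑ k, ‖T (b k)‖ ^ 2
      = ∑ x, ‖T (c x)‖ ^ 2 := b.sum_sq_norm_apply_eq c T.toLinearMap
    _ = ∑ j, ‖T (c (Sum.inr j))‖ ^ 2 := by
        simp [Fintype.sum_sum_type, hc _ (Set.mem_range_self _), hTv]
    _ ≤ ∑ _j : Fin (finrank 𝕜 E - Fintype.card ι), ‖T‖ ^ 2 := by
        gcongr with j
        simpa using T.le_opNorm (c (Sum.inr j))
    _ = (finrank 𝕜 E - Fintype.card ι : ℝ) * ‖T‖ ^ 2 := by
        simp [Nat.cast_sub hcard]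

end OrthonormalBasis

theorem Matrix.commutator_mulVec_eq_zero {R n : Type*} [CommRing R] [Fintype n]
    {A B : Matrix n n R} {x : n → R} {a b : R} (hA : A *ᵥ x = a • x) (hB : B *ᵥ x = b • x) :
    (A * B - B * A) *ᵥ x = 0 := by
  rw [Matrix.sub_mulVec, ← Matrix.mulVec_mulVec, ← Matrix.mulVec_mulVec, hA, hB,
    Matrix.mulVec_smul, Matrix.mulVec_smul, hA, hB, smul_smul, smul_smul, mul_comm, sub_self]

theorem frobNorm_sq_eq_sum_sq_norm_toEuclideanLin {n : ℕ} (X : Matrix (Fin n) (Fin n) ℂ) :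
    frobNorm X ^ 2 = ∑ j, ‖X.toEuclideanLin (EuclideanSpace.basisFun (Fin n) ℂ j)‖ ^ 2 := by
  rw [frobNorm, Real.sq_sqrt (by positivity), sum_comm]
  simp [EuclideanSpace.norm_sq_eq]

theorem EuclideanSpace.orthonormal_toLp_iff {𝕜 ι n : Type*} [RCLike 𝕜] [DecidableEq ι]
    [Fintype n] {v : ι → n → 𝕜} :
    Orthonormal 𝕜 (fun i ↦ WithLp.toLp 2 (v i)) ↔
      ∀ i j, star (v i) ⬝ᵥ v j = if i = j then 1 else 0 := by
  simp [orthonormal_iff_ite, EuclideanSpace.inner_toLp_toLp, dotProduct_comm]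

theorem frobNorm_sq_le_of_orthonormal_mulVec_eq_zero {n r : ℕ} (X : Matrix (Fin n) (Fin n) ℂ)
    {v : Fin r → Fin n → ℂ} (hv : Orthonormal ℂ fun i ↦ WithLp.toLp 2 (v i))
    (hXv : ∀ i, X *ᵥ v i = 0) :
    frobNorm X ^ 2 ≤ (n - r : ℝ) * specNorm X ^ 2 := by
  rw [frobNorm_sq_eq_sum_sq_norm_toEuclideanLin]
  simpa [specNorm] using
    (EuclideanSpace.basisFun (Fin n) ℂ).sum_sq_norm_apply_le_of_orthonormal_of_apply_eq_zero
      (LinearMap.toContinuousLinearMap X.toEuclideanLin) hv fun i ↦ by simp [hXv]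

theorem stmt1_general {N r : ℕ} (A B : Matrix (Fin N) (Fin N) ℂ)
    (v : Fin r → (Fin N → ℂ))
    (horth : ∀ i j, star (v i) ⬝ᵥ v j = if i = j then 1 else 0)
    (α β : Fin r → ℂ)
    (hAv : ∀ i, A.mulVec (v i) = α i • v i)
    (hBv : ∀ i, B.mulVec (v i) = β i • v i) :
    (r : ℝ) ≤ (N : ℝ) - (frobNorm (A * B - B * A) / specNorm (A * B - B * A)) ^ 2 := by
  have hv := EuclideanSpace.orthonormal_toLp_iff.mpr horth
  have hrN : r ≤ N := by simpa using hv.linearIndependent.fintype_card_le_finrank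
  have hbound := frobNorm_sq_le_of_orthonormal_mulVec_eq_zero (A * B - B * A) hv
    fun i ↦ Matrix.commutator_mulVec_eq_zero (hAv i) (hBv i)
  have := div_le_of_le_mul₀ (sq_nonneg _) (sub_nonneg.2 (Nat.cast_le.2 hrN)) hbound
  rw [div_pow]
  linarith

theorem stmt1 {N r : ℕ} (A B : Matrix (Fin N) (Fin N) ℂ)
    (hA : A.IsHermitian) (hB : B.IsHermitian)
    (hC : A * B - B * A ≠ 0)
    (v : Fin r → (Fin N → ℂ))
    (horth : ∀ i j, star (v i) ⬝ᵥ v j = if i = j then 1 else 0)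
    (α β : Fin r → ℂ)
    (hAv : ∀ i, A.mulVec (v i) = α i • v i)
    (hBv : ∀ i, B.mulVec (v i) = β i • v i) :
    (r : ℝ) ≤ (N : ℝ) - (frobNorm (A * B - B * A) / specNorm (A * B - B * A)) ^ 2 :=
  stmt1_general A B v horth α β hAv hBv
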